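/- Suppose min_k(s_{k+1}−s_k) ≥ t^{γ0} and fix 0 < β < γ < γ0. For each 1 ≤ k ≤ M−1 let L_k be the smallest index l with T(l) ≥ s_k + t^γ and U_k the largest index l with T(l) ≤ s_{k+1} − 1. Then E(L_{k+1} − U_k) ≥ t^{γ−β} for all sufficiently large t, and there exists a constant C > 0 such that for all sufficiently large t, P( ∩_{k=1}^{M−1} { L_{k+1} − U_k ≥ t^{γ−β}/2 } ) ≥ 1 − t·exp(−C·t^{γ−β}). -/

import Mathlib

open MeasureTheory ProbabilityTheory Finset Real
open scoped ProbabilityTheory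

/-- `#E(t)`, the number of sampling times among `{1, …, t}`. -/
def sampCount {Ω : Type*} (Z : ℕ → Ω → ℕ) (t : ℕ) (ω : Ω) : ℕ :=
  ((Finset.Icc 1 t).filter (fun j => Z j ω = 1)).card

/-- `T(l)`, the `l`-th smallest sampling time in `E(t)` (for `1 ≤ l ≤ #E(t)`). -/
def Tidx {Ω : Type*} (Z : ℕ → Ω → ℕ) (t : ℕ) (l : ℕ) (ω : Ω) : ℕ :=
  (((Finset.Icc 1 t).filter (fun j => Z j ω = 1)).sort (· ≤ ·)).getD (l - 1) 0

/-- `L_k`: the smallest index `l` with `T(l) ≥ s_k + t^γ`. -/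
noncomputable def Lidx {Ω : Type*} (Z : ℕ → Ω → ℕ) (s : ℕ → ℕ) (t : ℕ) (γ : ℝ)
    (k : ℕ) (ω : Ω) : ℕ :=
  sInf {l : ℕ | 1 ≤ l ∧ l ≤ sampCount Z t ω ∧
    (s k : ℝ) + (t : ℝ) ^ γ ≤ (Tidx Z t l ω : ℝ)}

/-- `U_k`: the largest index `l` with `T(l) ≤ s_{k+1} − 1`. -/
noncomputable def Uidx {Ω : Type*} (Z : ℕ → Ω → ℕ) (s : ℕ → ℕ) (t : ℕ)
    (k : ℕ) (ω : Ω) : ℕ :=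
  sSup {l : ℕ | 1 ≤ l ∧ l ≤ sampCount Z t ω ∧ Tidx Z t l ω ≤ s (k + 1) - 1}

/-!
Since `T` enumerates `E(t)` in increasing order, `U_k` is the number of sampling times below
`s_{k+1}`, and `L_{k+1}` is one more than the number of sampling times below `s_{k+1} + t^γ` as
soon as some sampling time lies beyond. Hence, off the event `N` that none of the indices in
`[s_{k+1} + ⌈t^γ⌉, t]` is sampled, `L_{k+1} - U_k = 1 + X` where `X` counts the sampling times in
the window `W = [s_{k+1}, s_{k+1} + ⌈t^γ⌉)`. Now `E X = ∑_{j ∈ W} j^{-β} ≥ t^{γ-β}`, a Chernoff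
bound makes `X < t^{γ-β}/2` exponentially unlikely, and the gap `t^{γ0}` leaves so many indices
after the window that `P(N) ≤ exp(-(t^{γ0-β} - t^{γ-β}))`, which beats the crude bound
`|L_{k+1} - U_k| ≤ t` in the expectation and survives a union bound over the at most `t` epochs.
-/

namespace Finset

theorem card_filter_lt_sort_getD {F : Finset ℕ} {n : ℕ} (hn : n < #F) :
    #(F.filter (· < (F.sort (· ≤ ·)).getD n 0)) = n := by
  have hf : (Set.ofPred (· ∈ F)).Finite := F.finite_toSet
  have hF : hf.toFinset = F := F.finite_toSet_toFinset
  rw [← hF, ← Nat.nth_eq_getD_sort hf]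
  calc _ = Nat.count (· ∈ F) (Nat.nth (· ∈ F) n) := by
        rw [Nat.count_eq_card_filter_range, hF]
        congr 1
        ext x
        simp [and_comm]
    _ = n := Nat.count_nth_of_lt_card_finite hf (by rwa [hF])

theorem pred_sort_getD_iff {F : Finset ℕ} {P : ℕ → Prop} [DecidablePred P]
    (hP : ∀ i j, i ≤ j → P j → P i) {n : ℕ} (hn : n < #F) :
    P ((F.sort (· ≤ ·)).getD n 0) ↔ n < #(F.filter P) := by
  have hx : (F.sort (· ≤ ·)).getD n 0 ∈ F := by
    rw [← Finset.mem_sort (· ≤ ·), List.getD_eq_getElem _ _ (by rwa [Finset.length_sort])]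
    exact List.getElem_mem _
  set x := (F.sort (· ≤ ·)).getD n 0
  have hrank : #(F.filter (· < x)) = n := card_filter_lt_sort_getD hn
  constructor
  · intro hPx
    calc n < #((F.filter (· < x)).cons x (by simp)) := by rw [card_cons, hrank]; omega
      _ ≤ #(F.filter P) := card_le_card fun j hj => by
          simp only [mem_cons, mem_filter] at hj ⊢
          rcases hj with rfl | ⟨hjF, hjx⟩
          · exact ⟨hx, hPx⟩
          · exact ⟨hjF, hP j x hjx.le hPx⟩
  · intro hlt
    by_contra hPx
    have : F.filter P ⊆ F.filter (· < x) := fun j hj => by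
      simp only [mem_filter] at hj ⊢
      exact ⟨hj.1, lt_of_not_ge fun hxj => hPx (hP x j hxj hj.2)⟩
    have := card_le_card this
    omega

theorem sSup_setOf_pred_sort_getD {F : Finset ℕ} {P : ℕ → Prop} [DecidablePred P]
    (hP : ∀ i j, i ≤ j → P j → P i) :
    sSup {l | 1 ≤ l ∧ l ≤ #F ∧ P ((F.sort (· ≤ ·)).getD (l - 1) 0)} = #(F.filter P) := by
  have hset : {l | 1 ≤ l ∧ l ≤ #F ∧ P ((F.sort (· ≤ ·)).getD (l - 1) 0)} =
      Set.Icc 1 #(F.filter P) := by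
    ext l
    simp only [Set.mem_ofPred_eq, Set.mem_Icc]
    have := card_filter_le F P
    constructor
    · rintro ⟨hl1, hlF, hPl⟩
      exact ⟨hl1, by have := (pred_sort_getD_iff hP (n := l - 1) (by omega)).1 hPl; omega⟩
    · rintro ⟨hl1, hlP⟩
      exact ⟨hl1, by omega, (pred_sort_getD_iff hP (by omega)).2 (by omega)⟩
  rcases Nat.eq_zero_or_pos #(F.filter P) with h | h
  · rw [hset, h]; simp
  · rw [hset, csSup_Icc (by omega)]

theorem sInf_setOf_pred_sort_getD {F : Finset ℕ} {Q : ℕ → Prop} [DecidablePred Q]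
    (hQ : ∀ i j, i ≤ j → Q i → Q j) (hF : ∃ j ∈ F, Q j) :
    sInf {l | 1 ≤ l ∧ l ≤ #F ∧ Q ((F.sort (· ≤ ·)).getD (l - 1) 0)} =
      #(F.filter (¬ Q ·)) + 1 := by
  have hP : ∀ i j, i ≤ j → ¬ Q j → ¬ Q i := fun i j hij hj hi => hj (hQ i j hij hi)
  have hlt : #(F.filter (¬ Q ·)) < #F := by
    obtain ⟨j, hjF, hQj⟩ := hF
    exact card_lt_card (filter_ssubset.2 ⟨j, hjF, not_not.2 hQj⟩)
  have hset : {l | 1 ≤ l ∧ l ≤ #F ∧ Q ((F.sort (· ≤ ·)).getD (l - 1) 0)} =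
      Set.Icc (#(F.filter (¬ Q ·)) + 1) #F := by
    ext l
    simp only [Set.mem_ofPred_eq, Set.mem_Icc]
    constructor
    · rintro ⟨hl1, hlF, hPl⟩
      exact ⟨by
        have := mt (pred_sort_getD_iff hP (n := l - 1) (by omega)).2 (not_not.2 hPl); omega, hlF⟩
    · rintro ⟨hlP, hlF⟩
      exact ⟨by omega, hlF, not_not.1 fun h => by
        have := (pred_sort_getD_iff hP (by omega)).1 h; omega⟩
  rw [hset, csInf_Icc (by omega)]

end Finset

theorem measurable_of_forall_le_eq {Ω α β : Type*} [MeasurableSpace Ω] [MeasurableSpace α]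
    [Countable α] [MeasurableSingletonClass α] [MeasurableSpace β] {Z : ℕ → Ω → α}
    (hZ : ∀ j, Measurable (Z j)) (t : ℕ) {g : Ω → β}
    (hg : ∀ ω ω', (∀ j ≤ t, Z j ω = Z j ω') → g ω = g ω') : Measurable g := by
  rcases isEmpty_or_nonempty Ω with hΩ | ⟨⟨ω₀⟩⟩
  · exact measurable_of_empty g
  let W : Ω → Fin (t + 1) → α := fun ω i => Z i ω
  have hW : Measurable W := measurable_pi_lambda _ fun i => hZ i
  have hgW : g.FactorsThrough W := fun ω ω' h =>
    hg ω ω' fun j hj => congrFun h ⟨j, Nat.lt_succ_of_le hj⟩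
  have : g = Function.extend W g (fun _ => g ω₀) ∘ W := funext fun ω => (hgW.extend_apply _ ω).symm
  rw [this]
  exact (measurable_of_countable _).comp hW

section ZeroOneValued

variable {Ω : Type*}

theorem comp_eq_add_indicator {X : Ω → ℕ} (h01 : ∀ ω, X ω = 0 ∨ X ω = 1) (f : ℕ → ℝ) :
    (fun ω => f (X ω)) = fun ω => f 0 + {ω | X ω = 1}.indicator (fun _ => f 1 - f 0) ω := by
  funext ω
  rcases h01 ω with h | h <;> simp [h]

theorem sum_eq_card_filter_eq_one {Z : ℕ → Ω → ℕ} (h01 : ∀ j ω, Z j ω = 0 ∨ Z j ω = 1)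
    (S : Finset ℕ) (ω : Ω) :
    ∑ j ∈ S, (Z j ω : ℝ) = #(S.filter (Z · ω = 1)) := by
  rw [natCast_card_filter]
  exact sum_congr rfl fun j _ => by rcases h01 j ω with h | h <;> simp [h]

variable [MeasurableSpace Ω] {μ : Measure Ω}

theorem integrable_comp_of_zero_or_one [IsFiniteMeasure μ] {X : Ω → ℕ} (hX : Measurable X)
    (h01 : ∀ ω, X ω = 0 ∨ X ω = 1) (f : ℕ → ℝ) : Integrable (fun ω => f (X ω)) μ := by
  rw [comp_eq_add_indicator h01]
  exact (integrable_const _).add ((integrable_const _).indicator (hX (measurableSet_singleton 1)))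

theorem integral_comp_of_zero_or_one [IsProbabilityMeasure μ] {X : Ω → ℕ} (hX : Measurable X)
    (h01 : ∀ ω, X ω = 0 ∨ X ω = 1) (f : ℕ → ℝ) :
    ∫ ω, f (X ω) ∂μ = f 0 + (f 1 - f 0) * μ.real {ω | X ω = 1} := by
  have hm : MeasurableSet {ω | X ω = 1} := hX (measurableSet_singleton 1)
  rw [comp_eq_add_indicator h01, integral_add (integrable_const _)
    ((integrable_const _).indicator hm), integral_indicator_const _ hm]
  simp [mul_comm]

theorem measureReal_eq_zero_of_zero_or_one [IsProbabilityMeasure μ] {X : Ω → ℕ}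
    (hX : Measurable X) (h01 : ∀ ω, X ω = 0 ∨ X ω = 1) :
    μ.real {ω | X ω = 0} = 1 - μ.real {ω | X ω = 1} := by
  have hcompl : {ω | X ω = 0} = {ω | X ω = 1}ᶜ := by
    ext ω; rcases h01 ω with h | h <;> simp [h]
  have hm : MeasurableSet {ω | X ω = 1} := hX (measurableSet_singleton 1)
  rw [hcompl, measureReal_compl hm, probReal_univ]

variable {Z : ℕ → Ω → ℕ}

theorem measureReal_forall_eq_zero_le (hZ : ∀ j, Measurable (Z j))
    (h01 : ∀ j ω, Z j ω = 0 ∨ Z j ω = 1) (hind : iIndepFun Z μ) (J : Finset ℕ) :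
    μ.real {ω | ∀ j ∈ J, Z j ω = 0} ≤ exp (-∑ j ∈ J, μ.real {ω | Z j ω = 1}) := by
  have := hind.isProbabilityMeasure
  have hset : {ω | ∀ j ∈ J, Z j ω = 0} = ⋂ j ∈ J, Z j ⁻¹' {0} := by ext ω; simp
  calc μ.real {ω | ∀ j ∈ J, Z j ω = 0}
      = ∏ j ∈ J, (1 - μ.real {ω | Z j ω = 1}) := by
        rw [hset, measureReal_def, hind.measure_inter_preimage_eq_mul J
          (fun _ _ => measurableSet_singleton 0), ENNReal.toReal_prod]
        exact prod_congr rfl fun j _ => measureReal_eq_zero_of_zero_or_one (hZ j) (h01 j)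
    _ ≤ ∏ j ∈ J, exp (-μ.real {ω | Z j ω = 1}) :=
        prod_le_prod (fun j _ => sub_nonneg.2 measureReal_le_one)
          fun j _ => by linarith [add_one_le_exp (-μ.real {ω | Z j ω = 1})]
    _ = exp (-∑ j ∈ J, μ.real {ω | Z j ω = 1}) := by rw [← sum_neg_distrib, exp_sum]

/-- Chernoff's bound for the lower tail, evaluated at the parameter `-log 2`. -/
theorem measureReal_sum_le_le (hZ : ∀ j, Measurable (Z j))
    (h01 : ∀ j ω, Z j ω = 0 ∨ Z j ω = 1) (hind : iIndepFun Z μ) (J : Finset ℕ) (ε : ℝ) :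
    μ.real {ω | ∑ j ∈ J, (Z j ω : ℝ) ≤ ε}
      ≤ exp (log 2 * ε - (∑ j ∈ J, μ.real {ω | Z j ω = 1}) / 2) := by
  have := hind.isProbabilityMeasure
  set W : ℕ → Ω → ℝ := fun j ω => (Z j ω : ℝ)
  have hW : ∀ j, Measurable (W j) := fun j => measurable_from_top.comp (hZ j)
  have hindW : iIndepFun W μ := hind.comp _ fun _ => measurable_from_top
  have hmgf : ∀ j, mgf (W j) μ (-log 2) = 1 - μ.real {ω | Z j ω = 1} / 2 := fun j => by
    rw [mgf, integral_comp_of_zero_or_one (hZ j) (h01 j) fun n => exp (-log 2 * n)]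
    simp only [Nat.cast_zero, mul_zero, exp_zero, Nat.cast_one, mul_one, exp_neg, Nat.ofNat_pos,
      exp_log]
    ring
  have hsum : (fun ω => ∑ j ∈ J, (Z j ω : ℝ)) = ∑ j ∈ J, W j := by ext ω; simp [W]
  have hchernoff := measure_le_le_exp_mul_mgf (X := ∑ j ∈ J, W j) ε
    (neg_nonpos.2 (log_nonneg one_le_two)) (hindW.integrable_exp_mul_sum (s := J) hW fun j _ =>
      integrable_comp_of_zero_or_one (hZ j) (h01 j) fun n => exp (-log 2 * n))
  rw [hindW.mgf_sum hW] at hchernoff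
  calc μ.real {ω | ∑ j ∈ J, (Z j ω : ℝ) ≤ ε}
      ≤ exp (log 2 * ε) * ∏ j ∈ J, (1 - μ.real {ω | Z j ω = 1} / 2) := by
        simpa [hsum, hmgf] using hchernoff
    _ ≤ exp (log 2 * ε) * ∏ j ∈ J, exp (-(μ.real {ω | Z j ω = 1} / 2)) := by
        refine mul_le_mul_of_nonneg_left (prod_le_prod (fun j _ => ?_) fun j _ => ?_) (exp_pos _).le
        · linarith [measureReal_le_one (μ := μ) (s := {ω | Z j ω = 1})]
        · linarith [add_one_le_exp (-(μ.real {ω | Z j ω = 1} / 2))]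
    _ = exp (log 2 * ε - (∑ j ∈ J, μ.real {ω | Z j ω = 1}) / 2) := by
        rw [← exp_sum, ← exp_add, sum_neg_distrib, sum_div]
        ring_nf

theorem integral_sum_of_zero_or_one [IsProbabilityMeasure μ] (hZ : ∀ j, Measurable (Z j))
    (h01 : ∀ j ω, Z j ω = 0 ∨ Z j ω = 1) (J : Finset ℕ) :
    ∫ ω, ∑ j ∈ J, (Z j ω : ℝ) ∂μ = ∑ j ∈ J, μ.real {ω | Z j ω = 1} := by
  rw [integral_finsetSum J fun j _ =>
    integrable_comp_of_zero_or_one (hZ j) (h01 j) fun n => (n : ℝ)]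
  exact sum_congr rfl fun j _ => by
    simpa using integral_comp_of_zero_or_one (μ := μ) (hZ j) (h01 j) fun n => (n : ℝ)

theorem integrable_natCast_of_le [IsFiniteMeasure μ] {g : Ω → ℕ} (hg : Measurable g) {n : ℕ}
    (hgn : ∀ ω, g ω ≤ n) : Integrable (fun ω => (g ω : ℝ)) μ :=
  Integrable.of_bound (measurable_from_top.comp hg).aestronglyMeasurable n
    (Filter.Eventually.of_forall fun ω => by simpa using hgn ω)

end ZeroOneValued

section EpochIndices

variable {Ω : Type*} (Z : ℕ → Ω → ℕ) (s : ℕ → ℕ) (t : ℕ) (γ : ℝ)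

/-- The set `E(t)` of sampling times up to `t`. -/
def samplingSet (ω : Ω) : Finset ℕ := (Icc 1 t).filter (fun j => Z j ω = 1)

-- Holds even when no sampling time precedes `s_{k+1}`: then both sides are `0 = sSup ∅`.
theorem Uidx_eq_card (k : ℕ) (ω : Ω) :
    Uidx Z s t k ω = #((samplingSet Z t ω).filter (· ≤ s (k + 1) - 1)) :=
  sSup_setOf_pred_sort_getD fun _ _ hij hj => hij.trans hj

theorem Lidx_eq_card (k : ℕ) (ω : Ω)
    (h : ∃ j ∈ samplingSet Z t ω, (s k : ℝ) + (t : ℝ) ^ γ ≤ j) :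
    Lidx Z s t γ k ω = #((samplingSet Z t ω).filter (· < s k + ⌈(t : ℝ) ^ γ⌉₊)) + 1 := by
  have hiff : ∀ j : ℕ, j < s k + ⌈(t : ℝ) ^ γ⌉₊ ↔ ¬ (s k : ℝ) + (t : ℝ) ^ γ ≤ j := by
    intro j
    rw [add_comm, ← Nat.ceil_add_natCast (by positivity), Nat.lt_ceil, not_le, add_comm]
  simp_rw [hiff]
  exact sInf_setOf_pred_sort_getD (fun i j hij hi => le_trans hi (by exact_mod_cast hij)) h

theorem Lidx_succ_eq_Uidx_add (k : ℕ) (ω : Ω) (hb : 1 ≤ s (k + 1))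
    (h : ∃ j ∈ Icc (s (k + 1) + ⌈(t : ℝ) ^ γ⌉₊) t, Z j ω = 1) :
    Lidx Z s t γ (k + 1) ω = Uidx Z s t k ω + 1 +
      #((Ico (s (k + 1)) (s (k + 1) + ⌈(t : ℝ) ^ γ⌉₊)).filter (Z · ω = 1)) := by
  obtain ⟨j, hj, hZj⟩ := h
  rw [mem_Icc] at hj
  have hjw : (s (k + 1) : ℝ) + (t : ℝ) ^ γ ≤ j :=
    calc (s (k + 1) : ℝ) + (t : ℝ) ^ γ ≤ s (k + 1) + ⌈(t : ℝ) ^ γ⌉₊ := by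
          gcongr; exact Nat.le_ceil _
      _ ≤ j := by exact_mod_cast hj.1
  have hL := Lidx_eq_card Z s t γ (k + 1) ω
    ⟨j, by simp only [samplingSet, mem_filter, mem_Icc]; omega, hjw⟩
  have hsplit : (samplingSet Z t ω).filter (· < s (k + 1) + ⌈(t : ℝ) ^ γ⌉₊) =
      (samplingSet Z t ω).filter (· ≤ s (k + 1) - 1) ∪
        (Ico (s (k + 1)) (s (k + 1) + ⌈(t : ℝ) ^ γ⌉₊)).filter (Z · ω = 1) := by
    ext i; simp only [samplingSet, mem_union, mem_filter, mem_Icc, mem_Ico]; omega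
  have hdisj : Disjoint ((samplingSet Z t ω).filter (· ≤ s (k + 1) - 1))
      ((Ico (s (k + 1)) (s (k + 1) + ⌈(t : ℝ) ^ γ⌉₊)).filter (Z · ω = 1)) := by
    rw [disjoint_left]; intro i; simp only [samplingSet, mem_filter, mem_Icc, mem_Ico]; omega
  rw [hL, Uidx_eq_card, hsplit, card_union_of_disjoint hdisj]
  ring

theorem card_samplingSet_le (ω : Ω) : #(samplingSet Z t ω) ≤ t :=
  (card_filter_le _ _).trans (by simp)

theorem Uidx_le (k : ℕ) (ω : Ω) : Uidx Z s t k ω ≤ t := by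
  rw [Uidx_eq_card]
  exact (card_filter_le _ _).trans (card_samplingSet_le Z t ω)

theorem Lidx_le (k : ℕ) (ω : Ω) : Lidx Z s t γ k ω ≤ t := by
  by_cases h : {l : ℕ | 1 ≤ l ∧ l ≤ sampCount Z t ω ∧
      (s k : ℝ) + (t : ℝ) ^ γ ≤ (Tidx Z t l ω : ℝ)}.Nonempty
  · exact (Nat.sInf_mem h).2.1.trans (card_samplingSet_le Z t ω)
  · rw [Lidx, Set.not_nonempty_iff_eq_empty.1 h, Nat.sInf_empty]
    exact Nat.zero_le t

theorem samplingSet_congr {ω ω' : Ω} (h : ∀ j ≤ t, Z j ω = Z j ω') :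
    samplingSet Z t ω = samplingSet Z t ω' :=
  filter_congr fun j hj => by rw [h j (mem_Icc.1 hj).2]

theorem Lidx_sub_Uidx_eq {k : ℕ} (h01 : ∀ j ω, Z j ω = 0 ∨ Z j ω = 1) (hb1 : 1 ≤ s (k + 1))
    {ω : Ω} (hω : ¬ ∀ j ∈ Icc (s (k + 1) + ⌈(t : ℝ) ^ γ⌉₊) t, Z j ω = 0) :
    (Lidx Z s t γ (k + 1) ω : ℝ) - Uidx Z s t k ω =
      1 + ∑ j ∈ Ico (s (k + 1)) (s (k + 1) + ⌈(t : ℝ) ^ γ⌉₊), (Z j ω : ℝ) := by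
  have h : ∃ j ∈ Icc (s (k + 1) + ⌈(t : ℝ) ^ γ⌉₊) t, Z j ω = 1 := by
    simp only [not_forall, exists_prop] at hω
    obtain ⟨j, hj, hZj⟩ := hω
    exact ⟨j, hj, (h01 j ω).resolve_left hZj⟩
  rw [Lidx_succ_eq_Uidx_add Z s t γ k ω hb1 h, sum_eq_card_filter_eq_one h01]
  push_cast
  ring

theorem one_add_sum_sub_indicator_le_Lidx_sub_Uidx {k : ℕ} (h01 : ∀ j ω, Z j ω = 0 ∨ Z j ω = 1)
    (hb1 : 1 ≤ s (k + 1)) (hwt : s (k + 1) + ⌈(t : ℝ) ^ γ⌉₊ ≤ t) (ω : Ω) :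
    1 + ∑ j ∈ Ico (s (k + 1)) (s (k + 1) + ⌈(t : ℝ) ^ γ⌉₊), (Z j ω : ℝ) -
        {ω | ∀ j ∈ Icc (s (k + 1) + ⌈(t : ℝ) ^ γ⌉₊) t, Z j ω = 0}.indicator
          (fun _ => 2 * (t : ℝ) + 1) ω
      ≤ (Lidx Z s t γ (k + 1) ω : ℝ) - Uidx Z s t k ω := by
  by_cases hω : ω ∈ {ω | ∀ j ∈ Icc (s (k + 1) + ⌈(t : ℝ) ^ γ⌉₊) t, Z j ω = 0}
  · have hsum : ∑ j ∈ Ico (s (k + 1)) (s (k + 1) + ⌈(t : ℝ) ^ γ⌉₊), (Z j ω : ℝ) ≤ t := by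
      rw [sum_eq_card_filter_eq_one h01]
      exact_mod_cast (card_filter_le _ _).trans (by rw [Nat.card_Ico]; omega)
    have hU : (Uidx Z s t k ω : ℝ) ≤ t := by exact_mod_cast Uidx_le Z s t k ω
    rw [Set.indicator_of_mem hω]
    linarith [(Lidx Z s t γ (k + 1) ω).cast_nonneg (α := ℝ)]
  · rw [Set.indicator_of_notMem hω, sub_zero, Lidx_sub_Uidx_eq Z s t γ h01 hb1 hω]

variable [MeasurableSpace Ω]

theorem measurable_Lidx (hZ : ∀ j, Measurable (Z j)) (k : ℕ) : Measurable (Lidx Z s t γ k) :=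
  measurable_of_forall_le_eq hZ t fun ω ω' h => by
    unfold Lidx sampCount Tidx
    rw [show (Icc 1 t).filter (Z · ω = 1) = _ from samplingSet_congr Z t h]
    rfl

theorem measurable_Uidx (hZ : ∀ j, Measurable (Z j)) (k : ℕ) : Measurable (Uidx Z s t k) :=
  measurable_of_forall_le_eq hZ t fun ω ω' h => by
    unfold Uidx sampCount Tidx
    rw [show (Icc 1 t).filter (Z · ω = 1) = _ from samplingSet_congr Z t h]
    rfl

end EpochIndices
theorem add_sub_le_of_forall_lt_succ {M : ℕ} {s : ℕ → ℕ}
    (hs : ∀ k, 1 ≤ k → k < M → s k < s (k + 1)) {a b : ℕ} (ha : 1 ≤ a) (hab : a ≤ b)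
    (hbM : b ≤ M) : s a + (b - a) ≤ s b := by
  induction b, hab using Nat.le_induction with
  | base => simp
  | succ b hab ih =>
    have := hs b (ha.trans hab) (by omega)
    have := ih (by omega)
    omega

theorem one_le_and_add_rpow_le_of_schedule {M t : ℕ} {s : ℕ → ℕ} {γ0 : ℝ} (hs1 : s 1 = 1)
    (hsM : s M = t) (hs : ∀ k, 1 ≤ k → k < M → s k < s (k + 1))
    (hgap : ∀ k, 1 ≤ k → k < M → (t : ℝ) ^ γ0 ≤ (s (k + 1) : ℝ) - (s k : ℝ))
    {k : ℕ} (hk : 1 ≤ k) (hkM : k + 1 < M) :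
    1 ≤ s (k + 1) ∧ (s (k + 1) : ℝ) + (t : ℝ) ^ γ0 ≤ t := by
  have h1 := add_sub_le_of_forall_lt_succ hs le_rfl (by omega : 1 ≤ k + 1) (by omega)
  have h2 := add_sub_le_of_forall_lt_succ hs (by omega : 1 ≤ k + 2) (by omega) le_rfl
  have h3 := hgap (k + 1) (by omega) hkM
  refine ⟨by omega, ?_⟩
  have : (s (k + 2) : ℝ) ≤ t := by exact_mod_cast hsM ▸ (Nat.le_add_right _ _).trans h2
  linarith

theorem card_mul_rpow_neg_le_sum {β : ℝ} (hβ : 0 ≤ β) {t : ℕ} {S : Finset ℕ}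
    (hS : ∀ j ∈ S, 1 ≤ j ∧ j ≤ t) : #S * (t : ℝ) ^ (-β) ≤ ∑ j ∈ S, (j : ℝ) ^ (-β) := by
  rw [← nsmul_eq_mul]
  exact card_nsmul_le_sum _ _ _ fun j hj => rpow_le_rpow_of_nonpos (by exact_mod_cast (hS j hj).1)
    (by exact_mod_cast (hS j hj).2) (neg_nonpos.2 hβ)

section Window

variable {β γ γ0 : ℝ} {t b : ℕ}

theorem add_ceil_rpow_le (hbt : (b : ℝ) + (t : ℝ) ^ γ0 ≤ t)
    (hγ : (t : ℝ) ^ γ + 1 ≤ (t : ℝ) ^ γ0) : b + ⌈(t : ℝ) ^ γ⌉₊ ≤ t := by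
  have := Nat.ceil_lt_add_one (rpow_nonneg (Nat.cast_nonneg t) γ)
  have : ((b + ⌈(t : ℝ) ^ γ⌉₊ : ℕ) : ℝ) ≤ t := by push_cast; linarith
  exact_mod_cast this

theorem rpow_sub_le_sum_Ico (hβ : 0 ≤ β) (hb1 : 1 ≤ b) (hbt : (b : ℝ) + (t : ℝ) ^ γ0 ≤ t)
    (hγ : (t : ℝ) ^ γ + 1 ≤ (t : ℝ) ^ γ0) :
    (t : ℝ) ^ (γ - β) ≤ ∑ j ∈ Ico b (b + ⌈(t : ℝ) ^ γ⌉₊), (j : ℝ) ^ (-β) := by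
  have hwt := add_ceil_rpow_le hbt hγ
  have ht : (0 : ℝ) < t := by exact_mod_cast (by omega : 0 < t)
  calc (t : ℝ) ^ (γ - β) = (t : ℝ) ^ γ * (t : ℝ) ^ (-β) := by
        rw [← rpow_add ht, sub_eq_add_neg]
    _ ≤ #(Ico b (b + ⌈(t : ℝ) ^ γ⌉₊)) * (t : ℝ) ^ (-β) := by
        gcongr
        simpa using Nat.le_ceil _
    _ ≤ _ := card_mul_rpow_neg_le_sum hβ fun j hj => by rw [mem_Ico] at hj; omega

theorem rpow_sub_sub_le_sum_Icc (hβ : 0 ≤ β) (hb1 : 1 ≤ b) (hbt : (b : ℝ) + (t : ℝ) ^ γ0 ≤ t)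
    (hγ : (t : ℝ) ^ γ + 1 ≤ (t : ℝ) ^ γ0) :
    (t : ℝ) ^ (γ0 - β) - (t : ℝ) ^ (γ - β) ≤ ∑ j ∈ Icc (b + ⌈(t : ℝ) ^ γ⌉₊) t, (j : ℝ) ^ (-β) := by
  have hwt := add_ceil_rpow_le hbt hγ
  have ht : (0 : ℝ) < t := by exact_mod_cast (by omega : 0 < t)
  have hw := Nat.ceil_lt_add_one (rpow_nonneg ht.le γ)
  calc (t : ℝ) ^ (γ0 - β) - (t : ℝ) ^ (γ - β) = ((t : ℝ) ^ γ0 - (t : ℝ) ^ γ) * (t : ℝ) ^ (-β) := by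
        rw [sub_mul, ← rpow_add ht, ← rpow_add ht, ← sub_eq_add_neg, ← sub_eq_add_neg]
    _ ≤ #(Icc (b + ⌈(t : ℝ) ^ γ⌉₊) t) * (t : ℝ) ^ (-β) := by
        gcongr
        rw [Nat.card_Icc, Nat.cast_sub (by omega)]
        push_cast
        linarith
    _ ≤ _ := card_mul_rpow_neg_le_sum hβ fun j hj => by rw [mem_Icc] at hj; omega

end Window

section GapBetweenEpochs

variable {Ω : Type*} [MeasurableSpace Ω] {μ : Measure Ω} {Z : ℕ → Ω → ℕ} {β : ℝ}

structure IsSamplingSequence (Z : ℕ → Ω → ℕ) (μ : Measure Ω) (β : ℝ) : Prop where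
  measurable : ∀ j, Measurable (Z j)
  zero_or_one : ∀ j ω, Z j ω = 0 ∨ Z j ω = 1
  measure_eq_one : ∀ j, 1 ≤ j → μ {ω | Z j ω = 1} = ENNReal.ofReal ((j : ℝ) ^ (-β))
  indep : iIndepFun Z μ

theorem IsSamplingSequence.sum_measureReal_eq (hZ : IsSamplingSequence Z μ β) {S : Finset ℕ}
    (hS : ∀ j ∈ S, 1 ≤ j) : ∑ j ∈ S, μ.real {ω | Z j ω = 1} = ∑ j ∈ S, (j : ℝ) ^ (-β) :=
  sum_congr rfl fun j hj => by
    rw [measureReal_def, hZ.measure_eq_one j (hS j hj), ENNReal.toReal_ofReal (by positivity)]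

variable {t : ℕ} {γ γ0 : ℝ}

theorem IsSamplingSequence.le_sum_measureReal_Ico (hZ : IsSamplingSequence Z μ β) (hβ : 0 ≤ β)
    {b : ℕ} (hb1 : 1 ≤ b) (hbt : (b : ℝ) + (t : ℝ) ^ γ0 ≤ t)
    (hγ : (t : ℝ) ^ γ + 1 ≤ (t : ℝ) ^ γ0) :
    (t : ℝ) ^ (γ - β) ≤ ∑ j ∈ Ico b (b + ⌈(t : ℝ) ^ γ⌉₊), μ.real {ω | Z j ω = 1} := by
  rw [hZ.sum_measureReal_eq fun j hj => by rw [mem_Ico] at hj; omega]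
  exact rpow_sub_le_sum_Ico hβ hb1 hbt hγ

theorem IsSamplingSequence.measureReal_forall_Icc_eq_zero_le (hZ : IsSamplingSequence Z μ β)
    (hβ : 0 ≤ β) {b : ℕ} (hb1 : 1 ≤ b) (hbt : (b : ℝ) + (t : ℝ) ^ γ0 ≤ t)
    (hγ : (t : ℝ) ^ γ + 1 ≤ (t : ℝ) ^ γ0) :
    μ.real {ω | ∀ j ∈ Icc (b + ⌈(t : ℝ) ^ γ⌉₊) t, Z j ω = 0}
      ≤ exp (-((t : ℝ) ^ (γ0 - β) - (t : ℝ) ^ (γ - β))) := by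
  refine (measureReal_forall_eq_zero_le hZ.measurable hZ.zero_or_one hZ.indep _).trans ?_
  rw [hZ.sum_measureReal_eq fun j hj => by rw [mem_Icc] at hj; omega]
  gcongr
  exact rpow_sub_sub_le_sum_Icc hβ hb1 hbt hγ

variable {s : ℕ → ℕ} {k : ℕ}

theorem le_integral_Lidx_sub_Uidx (hZ : IsSamplingSequence Z μ β) (hβ : 0 ≤ β)
    (hγ : (t : ℝ) ^ γ + 1 ≤ (t : ℝ) ^ γ0)
    (hexp : (2 * t + 1) * exp (-((t : ℝ) ^ (γ0 - β) - (t : ℝ) ^ (γ - β))) ≤ 1)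
    (hb1 : 1 ≤ s (k + 1)) (hbt : (s (k + 1) : ℝ) + (t : ℝ) ^ γ0 ≤ t) :
    (t : ℝ) ^ (γ - β) ≤ ∫ ω, ((Lidx Z s t γ (k + 1) ω : ℝ) - Uidx Z s t k ω) ∂μ := by
  have := hZ.indep.isProbabilityMeasure
  set I := Ico (s (k + 1)) (s (k + 1) + ⌈(t : ℝ) ^ γ⌉₊)
  set N := {ω | ∀ j ∈ Icc (s (k + 1) + ⌈(t : ℝ) ^ γ⌉₊) t, Z j ω = 0}
  have hN : MeasurableSet N := by
    simp only [N, Set.ofPred_forall]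
    exact Finset.measurableSet_biInter _ fun j _ => hZ.measurable j (measurableSet_singleton 0)
  have hsum : Integrable (fun ω => ∑ j ∈ I, (Z j ω : ℝ)) μ := integrable_finsetSum I fun j _ =>
    integrable_comp_of_zero_or_one (hZ.measurable j) (hZ.zero_or_one j) fun n => (n : ℝ)
  have hX : Integrable (fun ω => 1 + ∑ j ∈ I, (Z j ω : ℝ)) μ := (integrable_const _).add hsum
  have hNint : Integrable (N.indicator fun _ => 2 * (t : ℝ) + 1) μ :=
    (integrable_const _).indicator hN
  have hf : Integrable (fun ω => (Lidx Z s t γ (k + 1) ω : ℝ) - Uidx Z s t k ω) μ :=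
    (integrable_natCast_of_le (measurable_Lidx Z s t γ hZ.measurable _) (Lidx_le Z s t γ _)).sub
      (integrable_natCast_of_le (measurable_Uidx Z s t hZ.measurable _) (Uidx_le Z s t _))
  calc (t : ℝ) ^ (γ - β) ≤ 1 + ∑ j ∈ I, μ.real {ω | Z j ω = 1} - (2 * t + 1) * μ.real N := by
        have := hZ.measureReal_forall_Icc_eq_zero_le hβ hb1 hbt hγ
        have := hZ.le_sum_measureReal_Ico hβ hb1 hbt hγ
        nlinarith
    _ = ∫ ω, (1 + ∑ j ∈ I, (Z j ω : ℝ) - N.indicator (fun _ => 2 * (t : ℝ) + 1) ω) ∂μ := by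
        rw [integral_sub hX hNint, integral_add (integrable_const _) hsum,
          integral_indicator_const _ hN, integral_sum_of_zero_or_one hZ.measurable hZ.zero_or_one]
        simp [mul_comm]
    _ ≤ ∫ ω, ((Lidx Z s t γ (k + 1) ω : ℝ) - Uidx Z s t k ω) ∂μ :=
        integral_mono (hX.sub hNint) hf fun ω => one_add_sum_sub_indicator_le_Lidx_sub_Uidx Z s t γ
          hZ.zero_or_one hb1 (add_ceil_rpow_le hbt hγ) ω

theorem measureReal_Lidx_sub_Uidx_lt_le (hZ : IsSamplingSequence Z μ β) (hβ : 0 ≤ β)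
    (hγ : (t : ℝ) ^ γ + 1 ≤ (t : ℝ) ^ γ0) (hγβ : 2 * (t : ℝ) ^ (γ - β) ≤ (t : ℝ) ^ (γ0 - β))
    (hb1 : 1 ≤ s (k + 1)) (hbt : (s (k + 1) : ℝ) + (t : ℝ) ^ γ0 ≤ t) :
    μ.real {ω | (Lidx Z s t γ (k + 1) ω : ℝ) - Uidx Z s t k ω < (t : ℝ) ^ (γ - β) / 2}
      ≤ 2 * exp (-((1 - log 2) / 2) * (t : ℝ) ^ (γ - β)) := by
  have := hZ.indep.isProbabilityMeasure
  set x := (t : ℝ) ^ (γ - β)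
  set I := Ico (s (k + 1)) (s (k + 1) + ⌈(t : ℝ) ^ γ⌉₊)
  set N := {ω | ∀ j ∈ Icc (s (k + 1) + ⌈(t : ℝ) ^ γ⌉₊) t, Z j ω = 0}
  have hx : 0 ≤ x := by positivity
  have hlog : 0 < log 2 := log_pos one_lt_two
  have hsub : {ω | (Lidx Z s t γ (k + 1) ω : ℝ) - Uidx Z s t k ω < x / 2} ⊆
      N ∪ {ω | ∑ j ∈ I, (Z j ω : ℝ) ≤ x / 2 - 1} := fun ω hω => by
    by_cases hωN : ω ∈ N
    · exact Or.inl hωN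
    · have := Lidx_sub_Uidx_eq Z s t γ hZ.zero_or_one hb1 hωN
      simp only [Set.mem_ofPred_eq] at hω
      exact Or.inr (by simp only [Set.mem_ofPred_eq]; linarith)
  have hN : μ.real N ≤ exp (-((1 - log 2) / 2) * x) := by
    refine (hZ.measureReal_forall_Icc_eq_zero_le hβ hb1 hbt hγ).trans ?_
    gcongr
    nlinarith
  have hlower : μ.real {ω | ∑ j ∈ I, (Z j ω : ℝ) ≤ x / 2 - 1} ≤ exp (-((1 - log 2) / 2) * x) := by
    refine (measureReal_sum_le_le hZ.measurable hZ.zero_or_one hZ.indep I _).trans ?_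
    have := hZ.le_sum_measureReal_Ico hβ hb1 hbt hγ
    gcongr
    nlinarith
  calc _ ≤ μ.real (N ∪ {ω | ∑ j ∈ I, (Z j ω : ℝ) ≤ x / 2 - 1}) := measureReal_mono hsub
    _ ≤ μ.real N + μ.real {ω | ∑ j ∈ I, (Z j ω : ℝ) ≤ x / 2 - 1} := measureReal_union_le _ _
    _ ≤ 2 * exp (-((1 - log 2) / 2) * x) := by linarith

theorem one_sub_le_measure_forall_le_Lidx_sub_Uidx (hZ : IsSamplingSequence Z μ β)
    (hβ : 0 ≤ β) (hγ : (t : ℝ) ^ γ + 1 ≤ (t : ℝ) ^ γ0)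
    (hγβ : 2 * (t : ℝ) ^ (γ - β) ≤ (t : ℝ) ^ (γ0 - β))
    (hC : 2 * exp (-((1 - log 2) / 4) * (t : ℝ) ^ (γ - β)) ≤ 1) {M : ℕ} (hM : 2 ≤ M)
    (hs1 : s 1 = 1) (hsM : s M = t) (hs : ∀ k, 1 ≤ k → k < M → s k < s (k + 1))
    (hgap : ∀ k, 1 ≤ k → k < M → (t : ℝ) ^ γ0 ≤ (s (k + 1) : ℝ) - (s k : ℝ)) :
    1 - ENNReal.ofReal (t * exp (-((1 - log 2) / 4) * (t : ℝ) ^ (γ - β))) ≤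
      μ {ω | ∀ k, 1 ≤ k → k + 1 < M →
        (t : ℝ) ^ (γ - β) / 2 ≤ (Lidx Z s t γ (k + 1) ω : ℝ) - Uidx Z s t k ω} := by
  have := hZ.indep.isProbabilityMeasure
  set x := (t : ℝ) ^ (γ - β)
  set q := exp (-((1 - log 2) / 4) * x)
  set A := {ω | ∀ k, 1 ≤ k → k + 1 < M →
    x / 2 ≤ (Lidx Z s t γ (k + 1) ω : ℝ) - Uidx Z s t k ω}
  have hcompl : Aᶜ ⊆ ⋃ k ∈ Icc 1 (M - 2),
      {ω | (Lidx Z s t γ (k + 1) ω : ℝ) - Uidx Z s t k ω < x / 2} := fun ω hω => by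
    simp only [A, Set.mem_compl_iff, Set.mem_ofPred_eq, not_forall, not_le] at hω
    obtain ⟨k, hk, hkM, hlt⟩ := hω
    exact Set.mem_biUnion (mem_Icc.2 ⟨hk, by omega⟩) hlt
  have hMt : ((M - 2 : ℕ) : ℝ) ≤ t := by
    have := add_sub_le_of_forall_lt_succ hs le_rfl (by omega) le_rfl
    exact_mod_cast (by omega : M - 2 ≤ t)
  have hq2 : 2 * exp (-((1 - log 2) / 2) * x) ≤ q := by
    have : exp (-((1 - log 2) / 2) * x) = q * q := by rw [← exp_add]; ring_nf
    rw [this]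
    nlinarith [exp_pos (-((1 - log 2) / 4) * x)]
  have hAc : μ.real Aᶜ ≤ t * q :=
    calc μ.real Aᶜ ≤ ∑ k ∈ Icc 1 (M - 2),
          μ.real {ω | (Lidx Z s t γ (k + 1) ω : ℝ) - Uidx Z s t k ω < x / 2} :=
          (measureReal_mono hcompl (measure_ne_top _ _)).trans (measureReal_biUnion_finset_le _ _)
      _ ≤ ∑ _k ∈ Icc 1 (M - 2), q := sum_le_sum fun k hk => by
          rw [mem_Icc] at hk
          obtain ⟨hb1, hbt⟩ := one_le_and_add_rpow_le_of_schedule hs1 hsM hs hgap hk.1 (by omega)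
          exact (measureReal_Lidx_sub_Uidx_lt_le hZ hβ hγ hγβ hb1 hbt).trans hq2
      _ ≤ t * q := by
          rw [sum_const, Nat.card_Icc, nsmul_eq_mul]
          gcongr
          simpa using hMt
  rw [tsub_le_iff_right]
  calc 1 = μ (A ∪ Aᶜ) := by rw [Set.union_compl_self, measure_univ]
    _ ≤ μ A + μ Aᶜ := measure_union_le _ _
    _ ≤ μ A + ENNReal.ofReal (t * q) := by
        gcongr
        rw [← ofReal_measureReal]
        exact ENNReal.ofReal_le_ofReal hAc

end GapBetweenEpochs

section Asymptotics

open Filter Topology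

theorem eventually_two_mul_rpow_le {a b : ℝ} (hab : a < b) :
    ∀ᶠ x : ℝ in atTop, 2 * x ^ a ≤ x ^ b := by
  filter_upwards [(tendsto_rpow_atTop (sub_pos.2 hab)).eventually_ge_atTop 2,
    eventually_gt_atTop 0] with x hx hx0
  calc 2 * x ^ a ≤ x ^ (b - a) * x ^ a := by gcongr
    _ = x ^ b := by rw [← rpow_add hx0, sub_add_cancel]

theorem tendsto_mul_exp_neg_mul_rpow_atTop_nhds_zero {a c : ℝ} (ha : 0 < a) (hc : 0 < c) :
    Tendsto (fun x : ℝ => x * exp (-c * x ^ a)) atTop (𝓝 0) := by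
  refine ((tendsto_rpow_mul_exp_neg_mul_atTop_nhds_zero a⁻¹ c hc).comp
    (tendsto_rpow_atTop ha)).congr' ?_
  filter_upwards [eventually_ge_atTop 0] with x hx
  simp [rpow_rpow_inv hx ha.ne']

variable {β γ γ0 : ℝ}

theorem eventually_rpow_add_one_le (hγ : 0 ≤ γ) (hγγ0 : γ < γ0) :
    ∀ᶠ t : ℕ in atTop, (t : ℝ) ^ γ + 1 ≤ (t : ℝ) ^ γ0 := by
  filter_upwards [tendsto_natCast_atTop_atTop.eventually (eventually_two_mul_rpow_le hγγ0),
    eventually_ge_atTop 1] with t h2 ht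
  linarith [one_le_rpow (Nat.one_le_cast.2 ht : (1 : ℝ) ≤ t) hγ]

theorem eventually_mul_exp_neg_rpow_sub_le (hβγ : β < γ) (hγγ0 : γ < γ0) :
    ∀ᶠ t : ℕ in atTop,
      (2 * t + 1) * exp (-((t : ℝ) ^ (γ0 - β) - (t : ℝ) ^ (γ - β))) ≤ 1 := by
  have hdecay := (tendsto_mul_exp_neg_mul_rpow_atTop_nhds_zero (a := γ0 - β) (c := 1 / 2)
    (by linarith) one_half_pos).eventually (gt_mem_nhds (by norm_num : (0 : ℝ) < 1 / 3))
  filter_upwards [tendsto_natCast_atTop_atTop.eventually (eventually_two_mul_rpow_le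
    (by linarith : γ - β < γ0 - β)), tendsto_natCast_atTop_atTop.eventually hdecay,
    eventually_ge_atTop 1] with t h2 hsmall ht
  have ht1 : (1 : ℝ) ≤ t := Nat.one_le_cast.2 ht
  calc (2 * t + 1) * exp (-((t : ℝ) ^ (γ0 - β) - (t : ℝ) ^ (γ - β)))
      ≤ (3 * t) * exp (-(1 / 2) * (t : ℝ) ^ (γ0 - β)) := by
        gcongr
        · linarith
        · linarith
    _ ≤ 1 := by linarith

theorem eventually_two_mul_exp_neg_rpow_le (hβγ : β < γ) {C : ℝ} (hC : 0 < C) :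
    ∀ᶠ t : ℕ in atTop, 2 * exp (-C * (t : ℝ) ^ (γ - β)) ≤ 1 := by
  filter_upwards [tendsto_natCast_atTop_atTop.eventually
    ((tendsto_rpow_atTop (sub_pos.2 hβγ)).eventually_ge_atTop (log 2 / C))] with t ht
  rw [div_le_iff₀ hC] at ht
  calc 2 * exp (-C * (t : ℝ) ^ (γ - β)) ≤ 2 * exp (-log 2) := by gcongr; linarith
    _ = 1 := by rw [exp_neg, exp_log two_pos]; norm_num

end Asymptotics

theorem gap_between_epoch_indices_general
    (γ0 β γ : ℝ) (hβ0 : 0 < β) (hβγ : β < γ) (hγγ0 : γ < γ0) :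
    (∃ t0 : ℕ, ∀ t : ℕ, t0 ≤ t →
      ∀ (Ω : Type) (_ : MeasureSpace Ω), IsProbabilityMeasure (ℙ : Measure Ω) →
      ∀ (M : ℕ) (s : ℕ → ℕ) (Z : ℕ → Ω → ℕ),
        2 ≤ M → s 1 = 1 → s M = t →
        (∀ k : ℕ, 1 ≤ k → k < M → s k < s (k + 1)) →
        (∀ k : ℕ, 1 ≤ k → k < M → (t : ℝ) ^ γ0 ≤ (s (k + 1) : ℝ) - (s k : ℝ)) →
        (∀ j, Measurable (Z j)) →
        (∀ j, ∀ ω, Z j ω = 0 ∨ Z j ω = 1) →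
        (∀ j : ℕ, 1 ≤ j → ℙ {ω | Z j ω = 1} = ENNReal.ofReal ((j : ℝ) ^ (-β))) →
        iIndepFun Z ℙ →
        ∀ k : ℕ, 1 ≤ k → k + 1 < M →
          (t : ℝ) ^ (γ - β)
            ≤ 𝔼[fun ω => (Lidx Z s t γ (k + 1) ω : ℝ) - (Uidx Z s t k ω : ℝ)]) ∧
    (∃ C : ℝ, 0 < C ∧ ∃ t0 : ℕ, ∀ t : ℕ, t0 ≤ t →
      ∀ (Ω : Type) (_ : MeasureSpace Ω), IsProbabilityMeasure (ℙ : Measure Ω) →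
      ∀ (M : ℕ) (s : ℕ → ℕ) (Z : ℕ → Ω → ℕ),
        2 ≤ M → s 1 = 1 → s M = t →
        (∀ k : ℕ, 1 ≤ k → k < M → s k < s (k + 1)) →
        (∀ k : ℕ, 1 ≤ k → k < M → (t : ℝ) ^ γ0 ≤ (s (k + 1) : ℝ) - (s k : ℝ)) →
        (∀ j, Measurable (Z j)) →
        (∀ j, ∀ ω, Z j ω = 0 ∨ Z j ω = 1) →
        (∀ j : ℕ, 1 ≤ j → ℙ {ω | Z j ω = 1} = ENNReal.ofReal ((j : ℝ) ^ (-β))) →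
        iIndepFun Z ℙ →
        1 - ENNReal.ofReal ((t : ℝ) * Real.exp (-C * (t : ℝ) ^ (γ - β)))
          ≤ ℙ {ω | ∀ k : ℕ, 1 ≤ k → k + 1 < M →
              (t : ℝ) ^ (γ - β) / 2
                ≤ (Lidx Z s t γ (k + 1) ω : ℝ) - (Uidx Z s t k ω : ℝ)}) := by
  have hγ := eventually_rpow_add_one_le (hβ0.le.trans hβγ.le) hγγ0
  constructor
  · obtain ⟨t0, ht0⟩ :=
      Filter.eventually_atTop.1 (hγ.and (eventually_mul_exp_neg_rpow_sub_le hβγ hγγ0))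
    refine ⟨t0, fun t ht Ω _ _ M s Z _ hs1 hsM hs hgap hZ h01 hp hind k hk hkM => ?_⟩
    obtain ⟨hb1, hbt⟩ := one_le_and_add_rpow_le_of_schedule hs1 hsM hs hgap hk hkM
    exact le_integral_Lidx_sub_Uidx ⟨hZ, h01, hp, hind⟩ hβ0.le (ht0 t ht).1 (ht0 t ht).2 hb1 hbt
  · have hC : 0 < (1 - log 2) / 4 := by linarith [log_two_lt_d9]
    obtain ⟨t0, ht0⟩ := Filter.eventually_atTop.1 (hγ.and
      ((tendsto_natCast_atTop_atTop.eventually (eventually_two_mul_rpow_le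
        (by linarith : γ - β < γ0 - β))).and (eventually_two_mul_exp_neg_rpow_le hβγ hC)))
    exact ⟨_, hC, t0, fun t ht Ω _ _ M s Z hM hs1 hsM hs hgap hZ h01 hp hind =>
      one_sub_le_measure_forall_le_Lidx_sub_Uidx ⟨hZ, h01, hp, hind⟩ hβ0.le (ht0 t ht).1
        (ht0 t ht).2.1 (ht0 t ht).2.2 hM hs1 hsM hs hgap⟩

/-- Suppose `min_k (s_{k+1} − s_k) ≥ t^{γ0}` and fix `0 < β < γ < γ0`. Then
`E(L_{k+1} − U_k) ≥ t^{γ−β}` for all sufficiently large `t`, and there is `C > 0` such that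
for all sufficiently large `t`,
`P(∩_k {L_{k+1} − U_k ≥ t^{γ−β}/2}) ≥ 1 − t·exp(−C·t^{γ−β})`. -/
theorem gap_between_epoch_indices
    (γ0 β γ : ℝ) (hγ00 : 0 < γ0) (hγ01 : γ0 ≤ 1)
    (hβ0 : 0 < β) (hβγ : β < γ) (hγγ0 : γ < γ0) :
    (∃ t0 : ℕ, ∀ t : ℕ, t0 ≤ t →
      ∀ (Ω : Type) (_ : MeasureSpace Ω), IsProbabilityMeasure (ℙ : Measure Ω) →
      ∀ (M : ℕ) (s : ℕ → ℕ) (Z : ℕ → Ω → ℕ),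
        2 ≤ M → s 1 = 1 → s M = t →
        (∀ k : ℕ, 1 ≤ k → k < M → s k < s (k + 1)) →
        (∀ k : ℕ, 1 ≤ k → k < M → (t : ℝ) ^ γ0 ≤ (s (k + 1) : ℝ) - (s k : ℝ)) →
        (∀ j, Measurable (Z j)) →
        (∀ j, ∀ ω, Z j ω = 0 ∨ Z j ω = 1) →
        (∀ j : ℕ, 1 ≤ j → ℙ {ω | Z j ω = 1} = ENNReal.ofReal ((j : ℝ) ^ (-β))) →
        iIndepFun Z ℙ →
        ∀ k : ℕ, 1 ≤ k → k + 1 < M →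
          (t : ℝ) ^ (γ - β)
            ≤ 𝔼[fun ω => (Lidx Z s t γ (k + 1) ω : ℝ) - (Uidx Z s t k ω : ℝ)]) ∧
    (∃ C : ℝ, 0 < C ∧ ∃ t0 : ℕ, ∀ t : ℕ, t0 ≤ t →
      ∀ (Ω : Type) (_ : MeasureSpace Ω), IsProbabilityMeasure (ℙ : Measure Ω) →
      ∀ (M : ℕ) (s : ℕ → ℕ) (Z : ℕ → Ω → ℕ),
        2 ≤ M → s 1 = 1 → s M = t →
        (∀ k : ℕ, 1 ≤ k → k < M → s k < s (k + 1)) →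
        (∀ k : ℕ, 1 ≤ k → k < M → (t : ℝ) ^ γ0 ≤ (s (k + 1) : ℝ) - (s k : ℝ)) →
        (∀ j, Measurable (Z j)) →
        (∀ j, ∀ ω, Z j ω = 0 ∨ Z j ω = 1) →
        (∀ j : ℕ, 1 ≤ j → ℙ {ω | Z j ω = 1} = ENNReal.ofReal ((j : ℝ) ^ (-β))) →
        iIndepFun Z ℙ →
        1 - ENNReal.ofReal ((t : ℝ) * Real.exp (-C * (t : ℝ) ^ (γ - β)))
          ≤ ℙ {ω | ∀ k : ℕ, 1 ≤ k → k + 1 < M →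
              (t : ℝ) ^ (γ - β) / 2
                ≤ (Lidx Z s t γ (k + 1) ω : ℝ) - (Uidx Z s t k ω : ℝ)}) :=
  gap_between_epoch_indices_general γ0 β γ hβ0 hβγ hγγ0
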